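/- Let X be a real Hilbert space, let A be a nonempty closed affine subspace of X with parallel subspace U := A − A, and let H := {x ∈ X : ⟨x, c⟩ = γ} be a hyperplane, where c ∈ X, c ≠ 0, and γ ∈ ℝ. Let x ∈ X. If P_U(c) ≠ 0, then A ∩ H ≠ ∅ and P_{A∩H}(x) = P_A(x) + ((γ − ⟨P_A(x), c⟩)/‖P_U(c)‖²) · P_U(c). -/

import Mathlib

open RealInnerProductSpace Pointwise

/-- The metric (nearest-point) projection onto a set `C` in a real inner product space:
`metricProj C x` is a point of `C` minimizing the distance to `x` (when such a point exists;
for a nonempty closed convex set in a Hilbert space it exists and is unique). -/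
noncomputable def metricProj {X : Type*} [NormedAddCommGroup X] [InnerProductSpace ℝ X]
    (C : Set X) (x : X) : X :=
  letI := Classical.dec (∃ p ∈ C, ∀ q ∈ C, ‖x - p‖ ≤ ‖x - q‖)
  if h : ∃ p ∈ C, ∀ q ∈ C, ‖x - p‖ ≤ ‖x - q‖ then h.choose else 0

lemma metricProj_spec {X : Type*} [NormedAddCommGroup X] [InnerProductSpace ℝ X]
    [CompleteSpace X] {C : Set X} (hne : C.Nonempty) (hcl : IsClosed C) (hconv : Convex ℝ C)
    (x : X) :
    metricProj C x ∈ C ∧ ∀ q ∈ C, ⟪x - metricProj C x, q - metricProj C x⟫ ≤ 0 := by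
  obtain ⟨v, hv, hvmin⟩ := exists_norm_eq_iInf_of_complete_convex hne hcl.isComplete hconv x
  haveI : Nonempty C := ⟨⟨v, hv⟩⟩
  have hbdd : BddBelow (Set.range fun w : C => ‖x - (w : X)‖) := by
    refine ⟨0, ?_⟩
    rintro r ⟨w, rfl⟩
    exact norm_nonneg _
  have hex : ∃ p ∈ C, ∀ q ∈ C, ‖x - p‖ ≤ ‖x - q‖ := by
    refine ⟨v, hv, fun q hq => ?_⟩
    rw [hvmin]
    exact ciInf_le hbdd ⟨q, hq⟩
  have hproj : metricProj C x = hex.choose := by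
    simp only [metricProj, dif_pos hex]
  have hmem := hex.choose_spec.1
  have hmin := hex.choose_spec.2
  have hnorm : ‖x - hex.choose‖ = ⨅ w : C, ‖x - (w : X)‖ := by
    refine le_antisymm (le_ciInf fun w => hmin w w.2) ?_
    exact ciInf_le hbdd ⟨hex.choose, hmem⟩
  rw [hproj]
  exact ⟨hmem, (norm_eq_iInf_iff_real_inner_le_zero hconv hmem).mp hnorm⟩

lemma metricProj_eq_of {X : Type*} [NormedAddCommGroup X] [InnerProductSpace ℝ X]
    [CompleteSpace X] {C : Set X} (hcl : IsClosed C) (hconv : Convex ℝ C)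
    (x p : X) (hp : p ∈ C) (hmin : ∀ q ∈ C, ⟪x - p, q - p⟫ ≤ 0) :
    metricProj C x = p := by
  obtain ⟨hm, hms⟩ := metricProj_spec ⟨p, hp⟩ hcl hconv x
  set m := metricProj C x with hmdef
  have h1 : ⟪x - m, p - m⟫ ≤ 0 := hms p hp
  have h2 : ⟪x - p, m - p⟫ ≤ 0 := hmin m hm
  have key : ⟪m - p, m - p⟫ ≤ 0 := by
    have : (x - p) - (x - m) = m - p := by abel
    calc ⟪m - p, m - p⟫ = ⟪x - p, m - p⟫ - ⟪x - m, m - p⟫ := by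
          rw [← inner_sub_left, this]
      _ = ⟪x - p, m - p⟫ + ⟪x - m, p - m⟫ := by
          rw [show p - m = -(m - p) by abel, inner_neg_right]; ring
      _ ≤ 0 := by linarith
  have : m - p = 0 := by
    have := real_inner_self_nonpos.mp key
    simpa using this
  have := sub_eq_zero.mp this
  simpa using this

theorem trichotomy_case_three
    {X : Type*} [NormedAddCommGroup X] [InnerProductSpace ℝ X] [CompleteSpace X]
    (A : AffineSubspace ℝ X) (hA : (A : Set X).Nonempty) (hAc : IsClosed (A : Set X))
    (c : X) (hc : c ≠ 0) (γ : ℝ) (H : Set X) (hH : H = {y : X | ⟪y, c⟫ = γ})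
    (x : X) (hPU : metricProj (A.direction : Set X) c ≠ 0) :
    ((A : Set X) ∩ H).Nonempty ∧
      metricProj ((A : Set X) ∩ H) x
        = metricProj (A : Set X) x
          + ((γ - ⟪metricProj (A : Set X) x, c⟫) / ‖metricProj (A.direction : Set X) c‖ ^ 2)
              • metricProj (A.direction : Set X) c := by
  -- U and its closedness
  have hUcl : IsClosed (A.direction : Set X) := A.isClosed_direction_iff.mpr hAc
  have hUconv : Convex ℝ (A.direction : Set X) := A.direction.toAffineSubspace.convex
  -- u := metricProj U c
  set u := metricProj (A.direction : Set X) c with hu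
  obtain ⟨huU, huO⟩ := metricProj_spec ⟨0, A.direction.zero_mem⟩ hUcl hUconv c
  -- c - u ⊥ U
  have hperpU : ∀ v ∈ A.direction, ⟪c - u, v⟫ = 0 := by
    intro v hv
    have h1 : ⟪c - u, (u + v) - u⟫ ≤ 0 := huO _ (A.direction.add_mem huU hv)
    have h2 : ⟪c - u, (u - v) - u⟫ ≤ 0 := huO _ (A.direction.sub_mem huU hv)
    simp only [add_sub_cancel_left] at h1
    rw [show (u - v) - u = -v by abel, inner_neg_right] at h2
    linarith
  have hucu : ⟪u, c⟫ = ‖u‖ ^ 2 := by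
    have := hperpU u huU
    rw [inner_sub_left] at this
    have h2 : ⟪c, u⟫ = ⟪u, u⟫ := by linarith
    rw [real_inner_comm] at h2
    rw [h2, real_inner_self_eq_norm_sq]
  have hnu : ‖u‖ ^ 2 ≠ 0 := pow_ne_zero 2 (norm_ne_zero_iff.mpr hPU)
  -- a := metricProj A x
  set a := metricProj (A : Set X) x with ha
  obtain ⟨haA, haO⟩ := metricProj_spec hA hAc A.convex x
  have hperpA : ∀ v ∈ A.direction, ⟪x - a, v⟫ = 0 := by
    intro v hv
    have h1 : ⟪x - a, (v +ᵥ a) - a⟫ ≤ 0 :=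
      haO _ (A.vadd_mem_of_mem_direction hv haA)
    have h2 : ⟪x - a, ((-v) +ᵥ a) - a⟫ ≤ 0 :=
      haO _ (A.vadd_mem_of_mem_direction (A.direction.neg_mem hv) haA)
    simp only [vadd_eq_add, add_sub_cancel_right] at h1 h2
    rw [inner_neg_right] at h2
    linarith
  -- the candidate point
  set t := (γ - ⟪a, c⟫) / ‖u‖ ^ 2 with ht
  set p := a + t • u with hp
  have hpA : p ∈ (A : Set X) := by
    have : (t • u) +ᵥ a ∈ A :=
      A.vadd_mem_of_mem_direction (A.direction.smul_mem t huU) haA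
    simpa [hp, add_comm] using this
  have hpH : p ∈ H := by
    rw [hH]
    show ⟪p, c⟫ = γ
    rw [hp, inner_add_left, real_inner_smul_left, hucu, ht]
    field_simp
    ring
  refine ⟨⟨p, hpA, hpH⟩, ?_⟩
  -- closedness and convexity of A ∩ H
  have hHcl : IsClosed H := by
    rw [hH]
    exact isClosed_eq (Continuous.inner continuous_id continuous_const) continuous_const
  have hHconv : Convex ℝ H := by
    rw [hH]
    exact convex_hyperplane ⟨fun y z => inner_add_left y z c, fun r y => real_inner_smul_left y c r⟩ γ
  have hmin : ∀ q ∈ (A : Set X) ∩ H, ⟪x - p, q - p⟫ ≤ 0 := by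
    rintro q ⟨hqA, hqH⟩
    have hqpU : q - p ∈ A.direction := by
      have := AffineSubspace.vsub_mem_direction hqA hpA
      simpa using this
    have h1 : ⟪x - a, q - p⟫ = 0 := hperpA _ hqpU
    have h2 : ⟪c - u, q - p⟫ = 0 := hperpU _ hqpU
    have hq : ⟪q, c⟫ = γ := by rw [hH] at hqH; exact hqH
    have hpγ : ⟪p, c⟫ = γ := by rw [hH] at hpH; exact hpH
    have h3 : ⟪c, q - p⟫ = 0 := by
      rw [real_inner_comm, inner_sub_left, hq, hpγ, sub_self]
    have h4 : ⟪u, q - p⟫ = 0 := by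
      rw [inner_sub_left] at h2
      linarith
    have : x - p = (x - a) - t • u := by rw [hp]; abel
    rw [this, inner_sub_left, real_inner_smul_left, h1, h4]
    simp
  exact metricProj_eq_of (hAc.inter hHcl) (A.convex.inter hHconv) x p ⟨hpA, hpH⟩ hmin
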